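/- For every complex s with Re(s) > 1, ∑_{n≥1} a_n(−60)·n^{−s} = 2·(1 + 2^{1−2s} − 2^{1−s})·L(χ_{-15}, s), where a_n(−60) is the 60-periodic sequence defined by: a_n(−60) = 0 if 3∣n or 5∣n; a_n(−60) = 2 if n ≡ 1, 4, 8, 14, 16, 17, 19, 22, 23, 26, 31, 32, 47, 49, 53, or 58 (mod 60); a_n(−60) = −2 if n ≡ 2, 7, 11, 13, 28, 29, 34, 37, 38, 41, 43, 44, 46, 52, 56, or 59 (mod 60). -/

import Mathlib

/-- The quadratic Dirichlet character modulo 3: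
`χ₋₃(n) = 1` if `n ≡ 1 (mod 3)`, `-1` if `n ≡ 2 (mod 3)`, `0` if `3 ∣ n`. -/
def chiNeg3 (n : ℕ) : ℤ :=
  if n % 3 = 1 then 1 else if n % 3 = 2 then -1 else 0

/-- The quadratic Dirichlet character modulo 5 given by the Legendre symbol `(n/5)`. -/
def chi5 (n : ℕ) : ℤ :=
  if n % 5 = 1 ∨ n % 5 = 4 then 1 else if n % 5 = 2 ∨ n % 5 = 3 then -1 else 0

/-- The quadratic Dirichlet character modulo 15, `χ₋₁₅(n) = (n/3)·(n/5)`. -/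
def chiNeg15 (n : ℕ) : ℤ := chiNeg3 n * chi5 n

/-- The Dirichlet `L`-series `L(χ, s) = ∑_{n ≥ 1} χ(n) n^{-s}`. -/
noncomputable def LSer (χ : ℕ → ℤ) (s : ℂ) : ℂ :=
  ∑' n : ℕ, (χ (n + 1) : ℂ) / ((n : ℂ) + 1) ^ s

/-- The 60-periodic sequence `a_n(−60)`: `0` if `3 ∣ n` or `5 ∣ n`; `2` if
`n ≡ 1,4,8,14,16,17,19,22,23,26,31,32,47,49,53,58 (mod 60)`; `−2` if
`n ≡ 2,7,11,13,28,29,34,37,38,41,43,44,46,52,56,59 (mod 60)`. -/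
def a60 (n : ℕ) : ℤ :=
  if 3 ∣ n ∨ 5 ∣ n then 0
  else if n % 60 ∈ ({1, 4, 8, 14, 16, 17, 19, 22, 23, 26, 31, 32, 47, 49, 53, 58} :
      Finset ℕ) then 2
  else if n % 60 ∈ ({2, 7, 11, 13, 28, 29, 34, 37, 38, 41, 43, 44, 46, 52, 56, 59} :
      Finset ℕ) then -2
  else 0

/-!
The coefficients satisfy `a_n(−60) = 2 χ₋₁₅(n) + 4 [4 ∣ n] χ₋₁₅(n/4) − 4 [2 ∣ n] χ₋₁₅(n/2)`:
both sides are 60-periodic, so it is a finite check on `n < 60`. As the Dirichlet series of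
`n ↦ [d ∣ n] f(n/d)` is `d^{-s}` times that of `f`, the series equals
`(2 + 4·4^{-s} − 4·2^{-s}) L(χ₋₁₅, s)`, and `4·4^{-s} = 2·2^{1−2s}`, `4·2^{-s} = 2·2^{1−s}`.
-/

open LSeries Function

def dilate {R : Type*} [Zero R] (d : ℕ) (f : ℕ → R) (n : ℕ) : R :=
  if d ∣ n then f (n / d) else 0

section Dilate

variable {R : Type*} [Zero R]

lemma dilate_mul_left {d : ℕ} (hd : d ≠ 0) (f : ℕ → R) (n : ℕ) : dilate d f (d * n) = f n := by
  simp [dilate, Nat.mul_div_cancel_left n (Nat.pos_of_ne_zero hd)]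

lemma dilate_of_not_dvd {d n : ℕ} (h : ¬ d ∣ n) (f : ℕ → R) : dilate d f n = 0 :=
  if_neg h

lemma Function.Periodic.dilate {f : ℕ → R} {p : ℕ} (hf : Periodic f p) (d : ℕ) :
    Periodic (dilate d f) (d * p) := by
  intro n
  by_cases h : d ∣ n
  · obtain ⟨k, rfl⟩ := h
    rcases eq_or_ne d 0 with rfl | hd
    · simp
    · rw [← mul_add, dilate_mul_left hd, dilate_mul_left hd, hf]
  · rw [dilate_of_not_dvd h, dilate_of_not_dvd (by rwa [Nat.dvd_add_left (dvd_mul_right d p)])]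

lemma Int.cast_dilate {S : Type*} [AddGroupWithOne S] (d : ℕ) (f : ℕ → ℤ) (n : ℕ) :
    ((dilate d f n : ℤ) : S) = dilate d (fun m ↦ (f m : S)) n := by
  simp only [dilate, apply_ite (Int.cast : ℤ → S), Int.cast_zero]

end Dilate

namespace LSeries

lemma term_dilate_mul_left {d : ℕ} (hd : d ≠ 0) (f : ℕ → ℂ) (s : ℂ) (n : ℕ) :
    term (dilate d f) s (d * n) = (d : ℂ) ^ (-s) * term f s n := by
  rcases eq_or_ne n 0 with rfl | hn
  · simp
  rw [term_of_ne_zero (mul_ne_zero hd hn), term_of_ne_zero hn, dilate_mul_left hd, Nat.cast_mul,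
    Complex.natCast_mul_natCast_cpow, Complex.cpow_neg]
  field_simp

lemma term_dilate_of_not_dvd {d n : ℕ} (h : ¬ d ∣ n) (f : ℕ → ℂ) (s : ℂ) :
    term (dilate d f) s n = 0 := by
  simp [term_def, dilate_of_not_dvd h]

lemma support_term_dilate_subset (d : ℕ) (f : ℕ → ℂ) (s : ℂ) :
    support (term (dilate d f) s) ⊆ Set.range (d * ·) := fun n hn ↦ by
  by_contra h
  exact hn (term_dilate_of_not_dvd (fun ⟨k, hk⟩ ↦ h ⟨k, hk.symm⟩) f s)

end LSeries

lemma LSeries_dilate {d : ℕ} (hd : d ≠ 0) (f : ℕ → ℂ) (s : ℂ) :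
    LSeries (dilate d f) s = (d : ℂ) ^ (-s) * LSeries f s := by
  rw [LSeries, LSeries, ← tsum_mul_left,
    ← (mul_right_injective₀ hd).tsum_eq (support_term_dilate_subset d f s)]
  exact tsum_congr (term_dilate_mul_left hd f s)

lemma LSeriesSummable.dilate {d : ℕ} (hd : d ≠ 0) {f : ℕ → ℂ} {s : ℂ}
    (hf : LSeriesSummable f s) : LSeriesSummable (dilate d f) s := by
  rw [LSeriesSummable, ← (mul_right_injective₀ hd).summable_iff
    fun n hn ↦ notMem_support.mp fun h ↦ hn (support_term_dilate_subset d f s h)]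
  simpa only [comp_def, term_dilate_mul_left hd] using hf.mul_left _

lemma LSeries_eq_tsum_succ (f : ℕ → ℂ) (s : ℂ) :
    LSeries f s = ∑' n : ℕ, f (n + 1) / ((n : ℂ) + 1) ^ s := by
  have hsupp : support (term f s) ⊆ Set.range Nat.succ := fun n hn ↦ by
    rw [Nat.range_succ]
    exact Nat.pos_of_ne_zero fun h ↦ hn (h ▸ term_zero f s)
  rw [LSeries, ← Nat.succ_injective.tsum_eq hsupp]
  exact tsum_congr fun n ↦ by simp

lemma chiNeg15_periodic : Periodic chiNeg15 15 := fun n ↦ by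
  simp only [chiNeg15, chiNeg3, chi5, show (n + 15) % 3 = n % 3 by omega,
    show (n + 15) % 5 = n % 5 by omega]

lemma norm_chiNeg15_le_one (n : ℕ) : ‖(chiNeg15 n : ℂ)‖ ≤ 1 := by
  rw [Complex.norm_intCast]
  unfold chiNeg15 chiNeg3 chi5
  split_ifs <;> norm_num

lemma a60_periodic : Periodic a60 60 := fun n ↦ by
  have h : (3 ∣ n + 60 ∨ 5 ∣ n + 60) ↔ (3 ∣ n ∨ 5 ∣ n) := by omega
  simp only [a60, h, Nat.add_mod_right]

lemma a60_eq_chiNeg15_add_dilate (n : ℕ) :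
    a60 n = 2 * chiNeg15 n + 4 * dilate 4 chiNeg15 n - 4 * dilate 2 chiNeg15 n := by
  have hχ₆₀ : Periodic chiNeg15 60 := chiNeg15_periodic.nat_mul 4
  have hdilate₂ : Periodic (dilate 2 chiNeg15) 60 := (chiNeg15_periodic.dilate 2).nat_mul 2
  have hper : Periodic (fun n ↦ 2 * chiNeg15 n + 4 * dilate 4 chiNeg15 n
      - 4 * dilate 2 chiNeg15 n) 60 := fun n ↦ by
    simp only [hχ₆₀ n, chiNeg15_periodic.dilate 4 n, hdilate₂ n]
  have hsmall : ∀ m < 60, a60 m = 2 * chiNeg15 m + 4 * dilate 4 chiNeg15 m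
      - 4 * dilate 2 chiNeg15 m := by decide
  rw [← a60_periodic.map_mod_nat, ← hper.map_mod_nat]
  exact hsmall _ (Nat.mod_lt _ (by norm_num))

lemma two_cpow_one_sub (s : ℂ) : (2 : ℂ) ^ (1 - s) = 2 * 2 ^ (-s) := by
  rw [sub_eq_add_neg, Complex.cpow_add _ _ two_ne_zero, Complex.cpow_one]

lemma two_cpow_one_sub_two_mul (s : ℂ) : (2 : ℂ) ^ (1 - 2 * s) = 2 * 4 ^ (-s) := by
  rw [sub_eq_add_neg, Complex.cpow_add _ _ two_ne_zero, Complex.cpow_one, ← mul_neg,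
    show (2 : ℂ) = ((2 : ℕ) : ℂ) by norm_num, Complex.cpow_nat_mul, sq,
    ← Complex.natCast_mul_natCast_cpow]
  norm_num

/-- For `Re(s) > 1`, `∑_{n ≥ 1} a_n(−60) n^{-s} = 2(1 + 2^{1−2s} − 2^{1−s}) L(χ₋₁₅, s)`. -/
theorem a60_dirichlet_series (s : ℂ) (hs : 1 < s.re) :
    (∑' n : ℕ, (a60 (n + 1) : ℂ) / ((n : ℂ) + 1) ^ s) =
      2 * (1 + (2 : ℂ) ^ (1 - 2 * s) - (2 : ℂ) ^ (1 - s)) * LSer chiNeg15 s := by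
  set χ : ℕ → ℂ := fun n ↦ chiNeg15 n
  have hχ : LSeriesSummable χ s := LSeriesSummable_of_bounded_of_one_lt_re (m := 1)
    (fun n _ ↦ norm_chiNeg15_le_one n) hs
  have ha : (fun n ↦ (a60 n : ℂ)) = (2 : ℂ) • χ + (4 : ℂ) • dilate 4 χ - (4 : ℂ) • dilate 2 χ := by
    ext n
    simp [a60_eq_chiNeg15_add_dilate n, Int.cast_dilate, χ]
  have h₁ := hχ.smul 2
  have h₄ := (hχ.dilate four_ne_zero).smul 4
  have h₂ := (hχ.dilate two_ne_zero).smul 4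
  rw [LSer, ← LSeries_eq_tsum_succ (fun n ↦ (a60 n : ℂ)), ← LSeries_eq_tsum_succ χ, ha,
    LSeries_sub (h₁.add h₄) h₂, LSeries_add h₁ h₄, LSeries_smul, LSeries_smul, LSeries_smul,
    LSeries_dilate four_ne_zero, LSeries_dilate two_ne_zero, two_cpow_one_sub_two_mul,
    two_cpow_one_sub]
  push_cast
  ring
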